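/- Let L be a real symmetric positive semidefinite m×m matrix with L·1 = 0 whose largest eigenvalue satisfies λ_m(L) < 2. Then ‖I - L - J‖ < 1 if and only if λ₂(L) > 0, where λ₂(L) is the second-smallest eigenvalue of L (counted with multiplicity). -/

import Mathlib

open Matrix MeasureTheory

/-- The spectral norm (largest singular value) of a real `m × m` matrix,
realized as the operator norm of the induced map on Euclidean space. -/
noncomputable def specNorm {m : ℕ} (A : Matrix (Fin m) (Fin m) ℝ) : ℝ :=
  ‖Matrix.toEuclideanCLM (𝕜 := ℝ) (n := Fin m) A‖

/-- The matrix `J = (1/m)·11ᵀ`, with all entries equal to `1/m`. -/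
noncomputable def Jmat (m : ℕ) : Matrix (Fin m) (Fin m) ℝ :=
  Matrix.of fun _ _ => (m : ℝ)⁻¹

open Classical in
/-- The eigenvalues of a real symmetric matrix, sorted in nondecreasing order
(counted with multiplicity); junk value `0` if the matrix is not symmetric.
`eigSorted L ⟨i-1, _⟩` is the i-th smallest eigenvalue `λ_i(L)`. -/
noncomputable def eigSorted {m : ℕ} (L : Matrix (Fin m) (Fin m) ℝ) : Fin m → ℝ :=
  if h : L.IsHermitian then h.eigenvalues ∘ Tuple.sort h.eigenvalues else 0

open RealInnerProductSpace

section SpecAux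

variable {m : ℕ}

lemma toE_apply (A : Matrix (Fin m) (Fin m) ℝ) (x : EuclideanSpace ℝ (Fin m)) (i : Fin m) :
    (Matrix.toEuclideanCLM (𝕜 := ℝ) A x) i = ∑ j, A i j * x j := rfl

lemma inner_eq_sum (x y : EuclideanSpace ℝ (Fin m)) : ⟪x, y⟫ = ∑ i, x i * y i := by
  simp [PiLp.inner_apply, RCLike.inner_apply, mul_comm]

lemma herm_swap (A : Matrix (Fin m) (Fin m) ℝ) (hA : A.IsHermitian)
    (x y : EuclideanSpace ℝ (Fin m)) :
    ⟪Matrix.toEuclideanCLM (𝕜 := ℝ) A x, y⟫ = ⟪x, Matrix.toEuclideanCLM (𝕜 := ℝ) A y⟫ := by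
  have hsa : _root_.IsSelfAdjoint (Matrix.toEuclideanCLM (𝕜 := ℝ) A) := by
    rw [_root_.IsSelfAdjoint, ← map_star (Matrix.toEuclideanCLM (𝕜 := ℝ))]
    exact congrArg _ hA
  rw [← ContinuousLinearMap.adjoint_inner_right, hsa.adjoint_eq]

lemma eq_zero_of_inner_basis (x : EuclideanSpace ℝ (Fin m))
    (b : OrthonormalBasis (Fin m) ℝ (EuclideanSpace ℝ (Fin m)))
    (h : ∀ i, ⟪b i, x⟫ = 0) : x = 0 := by
  have := b.sum_repr' x
  simp only [h, zero_smul, Finset.sum_const_zero] at this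
  exact this.symm

lemma eigvec_apply (A : Matrix (Fin m) (Fin m) ℝ) (hA : A.IsHermitian) (j : Fin m) :
    Matrix.toEuclideanCLM (𝕜 := ℝ) A (hA.eigenvectorBasis j)
      = hA.eigenvalues j • hA.eigenvectorBasis j := by
  have := hA.mulVec_eigenvectorBasis j
  apply (WithLp.equiv 2 (Fin m → ℝ)).injective
  simpa using this

end SpecAux

/-- If `L` is real symmetric PSD with `L·1 = 0` and largest eigenvalue `λ_m(L) < 2`,
then `‖I - L - J‖ < 1` if and only if `λ₂(L) > 0`. -/
theorem spec_norm_lt_one_iff_connected {m : ℕ} (hm : 2 ≤ m)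
    (L : Matrix (Fin m) (Fin m) ℝ) (hL : L.PosSemidef)
    (h1 : L *ᵥ (fun _ => (1 : ℝ)) = 0)
    (hmax : eigSorted L ⟨m - 1, by omega⟩ < 2) :
    specNorm (1 - L - Jmat m) < 1 ↔ 0 < eigSorted L ⟨1, by omega⟩ := by
  classical
  have hH : L.IsHermitian := hL.1
  set μ : Fin m → ℝ := hH.eigenvalues with hμ
  set u := hH.eigenvectorBasis with hu
  set σ := Tuple.sort μ with hσ
  set T : Matrix (Fin m) (Fin m) ℝ → _ :=
    fun A => Matrix.toEuclideanCLM (𝕜 := ℝ) (n := Fin m) A with hTdef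
  have hspec : specNorm (1 - L - Jmat m) = ‖T (1 - L - Jmat m)‖ := rfl
  have hes : ∀ k : Fin m, eigSorted L k = μ (σ k) := by
    intro k
    simp only [eigSorted, dif_pos hH]
    rfl
  have he0ne1 : (⟨0, by omega⟩ : Fin m) ≠ ⟨1, by omega⟩ := by
    intro h; simp only [Fin.mk.injEq] at h; omega
  have hmono := Tuple.monotone_sort μ
  have hnn : ∀ i, 0 ≤ μ i := hL.eigenvalues_nonneg
  have hlt2 : ∀ i, μ i < 2 := by
    intro i
    have hle : (σ.symm i : Fin m) ≤ ⟨m - 1, by omega⟩ :=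
      Fin.le_def.mpr (show (σ.symm i).val ≤ m - 1 by
        have := (σ.symm i).isLt; omega)
    have h2 := hmono hle
    simp only [Function.comp_apply, ← hσ, Equiv.apply_symm_apply] at h2
    calc μ i ≤ μ (σ ⟨m - 1, by omega⟩) := h2
      _ < 2 := by rw [← hes]; exact hmax
  -- eigen equation and repr formula
  have heig : ∀ i, T L (u i) = μ i • u i := fun i => eigvec_apply L hH i
  have hswapL : ∀ x y : EuclideanSpace ℝ (Fin m), ⟪T L x, y⟫ = ⟪x, T L y⟫ :=
    fun x y => herm_swap L hH x y
  have hrepr : ∀ (x : EuclideanSpace ℝ (Fin m)) (i : Fin m),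
      ⟪u i, T L x⟫ = μ i * ⟪u i, x⟫ := by
    intro x i
    rw [← hswapL (u i) x, heig i, real_inner_smul_left]
  -- the all-ones vector
  set e : EuclideanSpace ℝ (Fin m) := (WithLp.equiv 2 (Fin m → ℝ)).symm (fun _ => 1) with he
  have he_apply : ∀ i, e i = 1 := fun _ => rfl
  have hsum_e : ∀ x : EuclideanSpace ℝ (Fin m), ⟪e, x⟫ = ∑ i, x i := by
    intro x; rw [inner_eq_sum]
    exact Finset.sum_congr rfl fun i _ => by rw [he_apply, one_mul]
  have hLe : T L e = 0 := by
    apply PiLp.ext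
    intro i
    have h1i := congrFun h1 i
    simp only [Matrix.mulVec, dotProduct, Pi.zero_apply] at h1i
    rw [toE_apply]
    simp only [he_apply, mul_one]
    simpa using h1i
  have he_ne : e ≠ 0 := by
    intro h
    have h10 : (1 : ℝ) = 0 := by
      calc (1 : ℝ) = e ⟨0, by omega⟩ := rfl
        _ = (0 : EuclideanSpace ℝ (Fin m)) ⟨0, by omega⟩ := by rw [h]
        _ = 0 := rfl
    norm_num at h10
  have hm0 : (m : ℝ) ≠ 0 := by positivity
  -- J facts
  have hJ_apply : ∀ (x : EuclideanSpace ℝ (Fin m)) i, (T (Jmat m) x) i = (∑ j, x j) / m := by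
    intro x i
    rw [toE_apply]
    simp only [Jmat, Matrix.of_apply]
    rw [← Finset.mul_sum, inv_mul_eq_div]
  have hJzero : ∀ x : EuclideanSpace ℝ (Fin m), ⟪e, x⟫ = 0 → T (Jmat m) x = 0 := by
    intro x hx
    apply PiLp.ext
    intro i
    rw [hJ_apply]
    rw [hsum_e] at hx
    rw [hx, zero_div]
    rfl
  have hqJ : ∀ x : EuclideanSpace ℝ (Fin m), ⟪x, T (Jmat m) x⟫ = (∑ i, x i)^2 / m := by
    intro x
    rw [inner_eq_sum]
    have hc : ∀ i ∈ Finset.univ, x i * (T (Jmat m) x) i = x i * ((∑ j, x j) / m) :=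
      fun i _ => by rw [hJ_apply]
    rw [Finset.sum_congr rfl hc, ← Finset.sum_mul]
    ring
  -- matrix identities
  have hsymm : ∀ i j, L i j = L j i := by
    intro i j
    have := congrFun (congrFun hH j) i
    simpa [Matrix.conjTranspose_apply] using this
  have hrow : ∀ i, ∑ j, L i j = 0 := by
    intro i
    have h1i := congrFun h1 i
    simpa [Matrix.mulVec, dotProduct, mul_one] using h1i
  have hLJ : L * Jmat m = 0 := by
    ext i j
    simp only [Matrix.mul_apply, Jmat, Matrix.of_apply, Matrix.zero_apply]
    rw [← Finset.sum_mul, hrow, zero_mul]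
  have hJL : Jmat m * L = 0 := by
    ext i j
    simp only [Matrix.mul_apply, Jmat, Matrix.of_apply, Matrix.zero_apply]
    rw [← Finset.mul_sum]
    have hcol : ∑ k, L k j = 0 := by
      rw [Finset.sum_congr rfl fun k _ => hsymm k j]
      exact hrow j
    rw [hcol, mul_zero]
  have hJJ : Jmat m * Jmat m = Jmat m := by
    ext i j
    simp only [Matrix.mul_apply, Jmat, Matrix.of_apply]
    rw [Finset.sum_const, Finset.card_univ, Fintype.card_fin, nsmul_eq_mul]
    field_simp
  have hMM : (1 : Matrix (Fin m) (Fin m) ℝ) - (1 - L - Jmat m) * (1 - L - Jmat m)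
      = (2:ℝ) • L + Jmat m - L * L := by
    simp only [sub_mul, mul_sub, mul_one, one_mul, hLJ, hJL, hJJ, sub_zero, two_smul]
    abel
  -- M hermitian
  have hJherm : (Jmat m).IsHermitian := by
    ext i j; simp [Jmat, Matrix.conjTranspose_apply]
  have hMherm : (1 - L - Jmat m).IsHermitian :=
    (Matrix.isHermitian_one.sub hH).sub hJherm
  -- quadratic form values
  have hqL : ∀ x : EuclideanSpace ℝ (Fin m), ⟪x, T L x⟫ = ∑ i, μ i * ⟪u i, x⟫^2 := by
    intro x
    rw [← u.sum_inner_mul_inner x (T L x)]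
    refine Finset.sum_congr rfl fun i _ => ?_
    rw [hrepr, real_inner_comm x (u i)]
    ring
  have hqLL : ∀ x : EuclideanSpace ℝ (Fin m),
      ⟪x, T L (T L x)⟫ = ∑ i, μ i^2 * ⟪u i, x⟫^2 := by
    intro x
    rw [← u.sum_inner_mul_inner x (T L (T L x))]
    refine Finset.sum_congr rfl fun i _ => ?_
    rw [hrepr, hrepr, real_inner_comm x (u i)]
    ring
  -- the key identity
  have hkey : ∀ x : EuclideanSpace ℝ (Fin m),
      ‖x‖^2 - ‖T (1 - L - Jmat m) x‖^2
        = (∑ i, μ i * (2 - μ i) * ⟪u i, x⟫^2) + (∑ i, x i)^2 / m := by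
    intro x
    have hswapM : ∀ y z : EuclideanSpace ℝ (Fin m),
        ⟪T (1 - L - Jmat m) y, z⟫ = ⟪y, T (1 - L - Jmat m) z⟫ :=
      fun y z => herm_swap _ hMherm y z
    have h2 : ‖T (1 - L - Jmat m) x‖^2
        = ⟪x, T ((1 - L - Jmat m) * (1 - L - Jmat m)) x⟫ := by
      rw [← real_inner_self_eq_norm_sq, hswapM]
      congr 1
      simp only [hTdef, _root_.map_mul, ContinuousLinearMap.mul_apply]
    rw [h2, ← real_inner_self_eq_norm_sq]
    have h3 : ⟪x, x⟫ - ⟪x, T ((1 - L - Jmat m) * (1 - L - Jmat m)) x⟫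
        = ⟪x, T ((1 : Matrix (Fin m) (Fin m) ℝ) - (1 - L - Jmat m) * (1 - L - Jmat m)) x⟫ := by
      simp only [hTdef, _root_.map_sub, _root_.map_one, ContinuousLinearMap.sub_apply,
        ContinuousLinearMap.one_apply]
      rw [← inner_sub_right]
    rw [h3, hMM]
    have h4 : T ((2:ℝ) • L + Jmat m - L * L) x
        = (2:ℝ) • (T L x) + T (Jmat m) x - T L (T L x) := by
      simp only [hTdef, _root_.map_sub, _root_.map_add, _root_.map_smul, _root_.map_mul,
        ContinuousLinearMap.sub_apply, ContinuousLinearMap.add_apply,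
        ContinuousLinearMap.smul_apply, ContinuousLinearMap.mul_apply]
    rw [h4, inner_sub_right, inner_add_right, real_inner_smul_right, hqL, hqLL, hqJ]
    rw [Finset.mul_sum]
    have hterm : ∑ i, (2:ℝ) * (μ i * ⟪u i, x⟫^2) - ∑ i, μ i^2 * ⟪u i, x⟫^2
        = ∑ i, μ i * (2 - μ i) * ⟪u i, x⟫^2 := by
      rw [← Finset.sum_sub_distrib]
      exact Finset.sum_congr rfl fun i _ => by ring
    linarith [hterm]
  -- coefficient vanishing for e
  have he_coef : ∀ i, μ i * ⟪u i, e⟫ = 0 := by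
    intro i
    rw [← hrepr, hLe, inner_zero_right]
  constructor
  · -- norm < 1 → λ₂ > 0
    intro hnorm
    rw [hspec] at hnorm
    by_contra hc
    push_neg at hc
    rw [hes] at hc
    have h00 : μ (σ ⟨0, by omega⟩) = 0 := by
      have hle01 : (⟨0, by omega⟩ : Fin m) ≤ ⟨1, by omega⟩ :=
        Fin.le_def.mpr (show (0:ℕ) ≤ 1 by omega)
      have h01 := hmono hle01
      simp only [Function.comp_apply] at h01
      linarith [hnn (σ ⟨0, by omega⟩)]
    have h11 : μ (σ ⟨1, by omega⟩) = 0 := le_antisymm hc (hnn _)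
    set i0 := σ ⟨0, by omega⟩ with hi0
    set i1 := σ ⟨1, by omega⟩ with hi1
    have hne : i0 ≠ i1 := fun h => he0ne1 (σ.injective h)
    have hker0 : T L (u i0) = 0 := by rw [heig, h00, zero_smul]
    have hker1 : T L (u i1) = 0 := by rw [heig, h11, zero_smul]
    set d0 := ⟪e, u i0⟫ with hd0
    set d1 := ⟪e, u i1⟫ with hd1
    have hinner10 : ⟪u i1, u i0⟫ = 0 := u.orthonormal.2 (Ne.symm hne)
    obtain ⟨v, hv_ne, hv_ker, hv_orth⟩ :
        ∃ v : EuclideanSpace ℝ (Fin m), v ≠ 0 ∧ T L v = 0 ∧ ⟪e, v⟫ = 0 := by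
      by_cases hd : d0 = 0
      · refine ⟨u i0, ?_, hker0, hd⟩
        intro h
        have hn1 := u.orthonormal.1 i0
        rw [h, norm_zero] at hn1
        norm_num at hn1
      · refine ⟨d1 • u i0 - d0 • u i1, ?_, ?_, ?_⟩
        · intro h
          have hip : ⟪u i1, d1 • u i0 - d0 • u i1⟫ = -d0 := by
            rw [inner_sub_right, real_inner_smul_right, real_inner_smul_right, hinner10,
              real_inner_self_eq_norm_sq, u.orthonormal.1 i1]
            ring
          rw [h, inner_zero_right] at hip
          exact hd (by linarith)
        · rw [_root_.map_sub, _root_.map_smul, _root_.map_smul, hker0, hker1,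
            smul_zero, smul_zero, sub_zero]
        · rw [inner_sub_right, real_inner_smul_right, real_inner_smul_right, ← hd0, ← hd1]
          ring
    have hJv : T (Jmat m) v = 0 := hJzero v hv_orth
    have hMv : T (1 - L - Jmat m) v = v := by
      have hTv : T (1 - L - Jmat m) v = v - T L v - T (Jmat m) v := by
        simp only [hTdef, _root_.map_sub, _root_.map_one, ContinuousLinearMap.sub_apply,
          ContinuousLinearMap.one_apply]
      rw [hTv, hv_ker, hJv, sub_zero, sub_zero]
    have hlev := (T (1 - L - Jmat m)).le_opNorm v
    rw [hMv] at hlev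
    have hvpos : 0 < ‖v‖ := norm_pos_iff.mpr hv_ne
    have hlt : ‖T (1 - L - Jmat m)‖ * ‖v‖ < 1 * ‖v‖ :=
      mul_lt_mul_of_pos_right hnorm hvpos
    rw [one_mul] at hlt
    linarith
  · -- λ₂ > 0 → norm < 1
    intro hpos
    rw [hes] at hpos
    have hstrict : ∀ x : EuclideanSpace ℝ (Fin m), x ≠ 0 →
        ‖T (1 - L - Jmat m) x‖ < ‖x‖ := by
      intro x hx
      have hq := hkey x
      have hterm_nn : ∀ i ∈ Finset.univ, (0:ℝ) ≤ μ i * (2 - μ i) * ⟪u i, x⟫^2 := by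
        intro i _
        exact mul_nonneg (mul_nonneg (hnn i) (by linarith [hlt2 i])) (sq_nonneg _)
      have hJnn : (0:ℝ) ≤ (∑ i, x i)^2 / m := by positivity
      have hqpos : 0 < ‖x‖^2 - ‖T (1 - L - Jmat m) x‖^2 := by
        rw [hq]
        by_contra hq0
        push_neg at hq0
        have hsum_nn : (0:ℝ) ≤ ∑ i, μ i * (2 - μ i) * ⟪u i, x⟫^2 :=
          Finset.sum_nonneg hterm_nn
        have hsum0 : ∑ i, μ i * (2 - μ i) * ⟪u i, x⟫^2 = 0 :=
          le_antisymm (by linarith) hsum_nn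
        have hs0 : (∑ i, x i) = 0 := by
          have hsq : (∑ i, x i)^2 / m = 0 := le_antisymm (by linarith) hJnn
          have h2 : (∑ i, x i)^2 = 0 := by
            rcases div_eq_zero_iff.mp hsq with h | h
            · exact h
            · exact absurd h hm0
          exact pow_eq_zero_iff (by norm_num) |>.mp h2
        have hez := (Finset.sum_eq_zero_iff_of_nonneg hterm_nn).mp hsum0
        have hmc : ∀ i, μ i * ⟪u i, x⟫ = 0 := by
          intro i
          by_contra hne'
          have hμne : μ i ≠ 0 := fun h => hne' (by rw [h, zero_mul])
          have hcne : ⟪u i, x⟫ ≠ 0 := fun h => hne' (by rw [h, mul_zero])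
          have hμpos : 0 < μ i := lt_of_le_of_ne (hnn i) (Ne.symm hμne)
          have hppos : 0 < μ i * (2 - μ i) * ⟪u i, x⟫^2 := by
            apply mul_pos (mul_pos hμpos (by linarith [hlt2 i]))
            positivity
          linarith [hez i (Finset.mem_univ i)]
        have hLx : T L x = 0 :=
          eq_zero_of_inner_basis _ u (fun i => by rw [hrepr]; exact hmc i)
        set i0 := σ ⟨0, by omega⟩ with hi0
        have hμposoff : ∀ i, i ≠ i0 → 0 < μ i := by
          intro i hi
          have hv0 : (σ.symm i).val ≠ 0 := by
            intro h
            apply hi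
            rw [← σ.apply_symm_apply i]
            rw [hi0]
            congr 1
            exact Fin.ext h
          have hge : (⟨1, by omega⟩ : Fin m) ≤ σ.symm i :=
            Fin.le_def.mpr (show 1 ≤ (σ.symm i).val by omega)
          have hm1 := hmono hge
          simp only [Function.comp_apply, ← hσ, Equiv.apply_symm_apply] at hm1
          linarith
        have hcoef : ∀ i, i ≠ i0 → ⟪u i, x⟫ = 0 := by
          intro i hi
          rcases mul_eq_zero.mp (hmc i) with h | h
          · exact absurd h (ne_of_gt (hμposoff i hi))
          · exact h
        have hecoef : ∀ i, i ≠ i0 → ⟪u i, e⟫ = 0 := by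
          intro i hi
          rcases mul_eq_zero.mp (he_coef i) with h | h
          · exact absurd h (ne_of_gt (hμposoff i hi))
          · exact h
        have hxrep : x = ⟪u i0, x⟫ • u i0 := by
          conv_lhs => rw [← u.sum_repr' x]
          exact Finset.sum_eq_single_of_mem i0 (Finset.mem_univ _)
            (fun i _ hi => by rw [hcoef i hi, zero_smul])
        have herep : e = ⟪u i0, e⟫ • u i0 := by
          conv_lhs => rw [← u.sum_repr' e]
          exact Finset.sum_eq_single_of_mem i0 (Finset.mem_univ _)
            (fun i _ hi => by rw [hecoef i hi, zero_smul])
        have hd0ne : ⟪e, u i0⟫ ≠ 0 := by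
          intro h
          apply he_ne
          have h' : ⟪u i0, e⟫ = 0 := by rw [real_inner_comm]; exact h
          rw [herep, h', zero_smul]
        have hex : ⟪e, x⟫ = 0 := by rw [hsum_e]; exact hs0
        rw [hxrep, real_inner_smul_right] at hex
        rcases mul_eq_zero.mp hex with h | h
        · exact hx (by rw [hxrep, h, zero_smul])
        · exact hd0ne h
      have hlt : ‖T (1 - L - Jmat m) x‖^2 < ‖x‖^2 := by linarith
      exact lt_of_pow_lt_pow_left₀ 2 (norm_nonneg x) hlt
    haveI : Nontrivial (EuclideanSpace ℝ (Fin m)) := ⟨⟨e, 0, he_ne⟩⟩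
    obtain ⟨x₀, hx₀S, hx₀max⟩ :=
      (isCompact_sphere (0 : EuclideanSpace ℝ (Fin m)) 1).exists_isMaxOn
        (NormedSpace.sphere_nonempty.mpr zero_le_one)
        ((T (1 - L - Jmat m)).continuous.norm.continuousOn)
    have hx₀norm : ‖x₀‖ = 1 := by simpa using mem_sphere_zero_iff_norm.mp hx₀S
    have hx₀ne : x₀ ≠ 0 := by
      intro h; rw [h, norm_zero] at hx₀norm; norm_num at hx₀norm
    have hC : ‖T (1 - L - Jmat m) x₀‖ < 1 := by
      have := hstrict x₀ hx₀ne
      rwa [hx₀norm] at this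
    have hople : ‖T (1 - L - Jmat m)‖ ≤ ‖T (1 - L - Jmat m) x₀‖ :=
      ContinuousLinearMap.opNorm_le_of_unit_norm (norm_nonneg _)
        (fun y hy => hx₀max (mem_sphere_zero_iff_norm.mpr hy))
    rw [hspec]
    exact lt_of_le_of_lt hople hC
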